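/- arXiv:2604.18104 — 6 statements merged into one kernel-verified Lean document; each statement's English description precedes it below -/
import Mathlib

section
/- Let m ≥ 1 and let G be a group with a finite-index normal subgroup A isomorphic to ℤ^m. Suppose there is a group homomorphism sgn : G → {1,−1} (the units of ℤ) such that g⁻¹ x g = x^{sgn g} for all g ∈ G and x ∈ A (where x^{1} = x and x^{−1} = x⁻¹). Then for every finite generating set Σ of G, α_{G,Σ} ∼ (n ↦ n), i.e. the automorphic growth of G is linear. -/
/-!
Let `N = [G : A]` and `u g = ∑_{r ∈ G ⧸ A} sgn(r̂) • coord(g r̂)` (the transfer of the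
`ℤ^m`-coordinate, `r̂` a coset representative). It is a crossed homomorphism,
`u (g h) = sgn h • u g + u h`, and `u (g v) = u g + N v` for `v ∈ A`. For `γ = 1 + N Ψ` in `SL_m(ℤ)`
the map `g ↦ g · Ψ (u g)` is then an automorphism, because `Ψ` commutes with the scalars `±1`
by which `G` acts on `A`, and it multiplies `u` by `γ`. The Euclidean algorithm writes every
`w ∈ ℤ^m` as `t • d e₀` with `t ∈ SL_m(ℤ)` and `|d| ≤ ‖w‖₁`. On the `n`-ball `‖u g‖₁ = O(n)`, and
the coset of `g`, `t mod N` and `d` for `w = u g` determine the orbit of `g`: `O(n)` orbits.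

Conversely, the largest `k` such that `g` is a `k`-th power is invariant under automorphisms. For
`a = e₀ ∈ A` it lies in `[j, jN]` and divides `jN` at `g = a ^ j`, so `a, …, aⁿ` meet at least
`n / N` orbits.
-/

/-- The ball of radius `n` in a group with respect to a generating set `S`:
elements expressible as a product of at most `n` elements of `S ∪ S⁻¹`. -/
def wordBall {G : Type*} [Group G] (S : Set G) (n : ℕ) : Set G :=
  {g | ∃ l : List G, (∀ x ∈ l, x ∈ S ∨ x⁻¹ ∈ S) ∧ l.length ≤ n ∧ l.prod = g}

/-- The automorphic growth function: the number of `Aut G`-orbits of `G`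
containing an element of word length at most `n` with respect to `S`. -/
noncomputable def autGrowth {G : Type*} [Group G] (S : Set G) (n : ℕ) : ℕ :=
  Set.ncard (Quotient.mk (MulAction.orbitRel (MulAut G) G) '' wordBall S n)

def GrowthLe (f g : ℕ → ℕ) : Prop :=
  ∃ lam : ℕ, 0 < lam ∧ ∀ n, f n ≤ lam * g (lam * n + lam) + lam

def GrowthEquiv (f g : ℕ → ℕ) : Prop := GrowthLe f g ∧ GrowthLe g f

section WordBall

variable {G : Type*} [Group G] {S : Set G}

theorem one_mem_wordBall (S : Set G) (n : ℕ) : (1 : G) ∈ wordBall S n :=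
  ⟨[], by simp, by simp, rfl⟩

theorem wordBall_mono (S : Set G) {n n' : ℕ} (h : n ≤ n') : wordBall S n ⊆ wordBall S n' :=
  fun _ ⟨l, hl, hlen, hprod⟩ ↦ ⟨l, hl, hlen.trans h, hprod⟩

theorem mul_mem_wordBall {g h : G} {a b : ℕ} (hg : g ∈ wordBall S a) (hh : h ∈ wordBall S b) :
    g * h ∈ wordBall S (a + b) := by
  obtain ⟨l, hl, hlen, rfl⟩ := hg
  obtain ⟨l', hl', hlen', rfl⟩ := hh
  refine ⟨l ++ l', fun x hx ↦ ?_, by simp; omega, List.prod_append⟩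
  rcases List.mem_append.1 hx with hx | hx
  exacts [hl x hx, hl' x hx]

theorem pow_mem_wordBall {g : G} {a : ℕ} (hg : g ∈ wordBall S a) (j : ℕ) :
    g ^ j ∈ wordBall S (j * a) := by
  induction j with
  | zero => simpa using one_mem_wordBall S 0
  | succ j ih => simpa [pow_succ, Nat.succ_mul] using mul_mem_wordBall ih hg

theorem exists_mem_wordBall (hS : Subgroup.closure S = ⊤) (g : G) : ∃ n, g ∈ wordBall S n := by
  have hg : g ∈ Submonoid.closure (S ∪ S⁻¹) := by
    rw [← Subgroup.closure_toSubmonoid, hS]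
    trivial
  obtain ⟨l, hl, rfl⟩ := Submonoid.exists_list_of_mem_closure hg
  exact ⟨l.length, l, hl, le_rfl, rfl⟩

theorem wordBall_finite (S : Finset G) (n : ℕ) : (wordBall (S : Set G) n).Finite := by
  set T : Set G := (S : Set G) ∪ (S : Set G)⁻¹
  have : Finite T := (S.finite_toSet.union S.finite_toSet.inv).to_subtype
  refine ((List.finite_length_le T n).image fun l ↦ (l.map Subtype.val).prod).subset ?_
  rintro _ ⟨l, hl, hlen, rfl⟩
  have hlT : ∀ x ∈ l, x ∈ T := hl
  refine ⟨l.pmap Subtype.mk hlT, by simpa using hlen, ?_⟩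
  simp [List.map_pmap]

theorem le_mul_of_mem_wordBall (f : G → ℕ) (hone : f 1 = 0)
    (hmul : ∀ g h, f (g * h) ≤ f g + f h) {K : ℕ} (hS : ∀ x, x ∈ S ∨ x⁻¹ ∈ S → f x ≤ K)
    {n : ℕ} {g : G} (hg : g ∈ wordBall S n) : f g ≤ K * n := by
  obtain ⟨l, hl, hlen, rfl⟩ := hg
  refine le_trans ?_ (Nat.mul_le_mul_left K hlen)
  clear hlen
  induction l with
  | nil => simp [hone]
  | cons x l ih =>
    rw [List.prod_cons, List.length_cons, mul_add_one, add_comm]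
    exact (hmul _ _).trans (add_le_add (hS x (hl x List.mem_cons_self))
      (ih fun y hy ↦ hl y (List.mem_cons_of_mem x hy)))

end WordBall

theorem growthLe_of_le_mul_add {f : ℕ → ℕ} {a b : ℕ} (h : ∀ n, f n ≤ a * n + b) :
    GrowthLe f fun n ↦ n := by
  set lam := a + b + 1
  refine ⟨lam, by omega, fun n ↦ (h n).trans ?_⟩
  have : a * n ≤ lam * (lam * n + lam) :=
    Nat.mul_le_mul (by omega) (Nat.le_add_right_of_le (Nat.le_mul_of_pos_left n (by omega)))
  change a * n + b ≤ lam * (lam * n + lam) + lam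
  omega

section OrbitCounting

variable {G : Type*} [Group G]

theorem orbitRel_mulAut_iff {g₁ g₂ : G} :
    MulAction.orbitRel (MulAut G) G g₁ g₂ ↔ ∃ φ : MulAut G, φ g₂ = g₁ :=
  MulAction.orbitRel_apply.trans MulAction.mem_orbit_iff

theorem autGrowth_le_card {β : Type*} (S : Finset G) (n : ℕ) (key : G → β) (T : Finset β)
    (hT : ∀ g ∈ wordBall (S : Set G) n, key g ∈ T)
    (hkey : ∀ g₁ ∈ wordBall (S : Set G) n, ∀ g₂ ∈ wordBall (S : Set G) n,
      key g₁ = key g₂ → ∃ φ : MulAut G, φ g₂ = g₁) :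
    autGrowth (S : Set G) n ≤ T.card := by
  classical
  set B := wordBall (S : Set G) n
  let pick := Function.invFunOn key B
  have hsub : Quotient.mk (MulAction.orbitRel (MulAut G) G) '' B ⊆
      (fun b ↦ Quotient.mk (MulAction.orbitRel (MulAut G) G) (pick b)) '' T := by
    rintro _ ⟨g, hg, rfl⟩
    have hex : ∃ g' ∈ B, key g' = key g := ⟨g, hg, rfl⟩
    refine ⟨key g, hT g hg, Quotient.sound ?_⟩
    exact orbitRel_mulAut_iff.2
      (hkey _ (Function.invFunOn_mem hex) g hg (Function.invFunOn_eq hex))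
  calc autGrowth (S : Set G) n ≤ _ := Set.ncard_le_ncard hsub (T.finite_toSet.image _)
    _ ≤ (T : Set β).ncard := Set.ncard_image_le T.finite_toSet
    _ = T.card := Set.ncard_coe_finset T

theorem ncard_image_wordBall_le_autGrowth {β : Type*} (S : Finset G) (n : ℕ) (D : G → β)
    (hD : ∀ (φ : MulAut G) g, D (φ g) = D g) :
    (D '' wordBall (S : Set G) n).ncard ≤ autGrowth (S : Set G) n := by
  let D' := Quotient.lift (s := MulAction.orbitRel (MulAut G) G) D <| by
    intro g₁ g₂ h
    obtain ⟨φ, rfl⟩ := orbitRel_mulAut_iff.1 h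
    exact hD φ g₂
  have : D '' wordBall (S : Set G) n =
      D' '' (Quotient.mk (MulAction.orbitRel (MulAut G) G) '' wordBall (S : Set G) n) := by
    rw [Set.image_image]
    rfl
  rw [this, autGrowth]
  exact Set.ncard_image_le ((wordBall_finite S n).image _)

end OrbitCounting

section IntegerVectors

variable {ι : Type*} [Fintype ι]

def l1Norm (u : ι → ℤ) : ℕ := ∑ i, (u i).natAbs

theorem l1Norm_add_le (u v : ι → ℤ) : l1Norm (u + v) ≤ l1Norm u + l1Norm v := by
  rw [l1Norm, l1Norm, l1Norm, ← Finset.sum_add_distrib]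
  exact Finset.sum_le_sum fun i _ ↦ Int.natAbs_add_le _ _

theorem l1Norm_units_smul (c : ℤˣ) (u : ι → ℤ) : l1Norm ((c : ℤ) • u) = l1Norm u := by
  simp [l1Norm, Int.natAbs_mul]

theorem natAbs_le_l1Norm (u : ι → ℤ) (i : ι) : (u i).natAbs ≤ l1Norm u :=
  Finset.single_le_sum (f := fun i ↦ (u i).natAbs) (fun _ _ ↦ Nat.zero_le _) (Finset.mem_univ i)

theorem Int.natAbs_emod_lt (a : ℤ) {b : ℤ} (hb : b ≠ 0) : (a % b).natAbs < b.natAbs := by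
  have hlt := Int.emod_lt_abs a hb
  have hnonneg := Int.emod_nonneg a hb
  rw [Int.abs_eq_natAbs] at hlt
  omega

end IntegerVectors

theorem exists_eq_single_of_forall_ne {α M : Type*} [DecidableEq α] [Zero M] [Nonempty α]
    {u : α → M} (h : ∀ i j, i ≠ j → u i ≠ 0 → u j = 0) : ∃ k, u = Pi.single k (u k) := by
  by_cases hu : ∃ k, u k ≠ 0
  · obtain ⟨k, hk⟩ := hu
    refine ⟨k, funext fun l ↦ ?_⟩
    rcases eq_or_ne l k with rfl | hlk
    · simp
    · simp [hlk, h k l hlk.symm hk]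
  · push Not at hu
    exact ⟨Classical.arbitrary α, funext fun l ↦ by simp [hu]⟩

namespace Matrix.SpecialLinearGroup

variable {ι : Type*} [Fintype ι] [DecidableEq ι]

theorem transvection_smul {R : Type*} [CommRing R] {i j : ι} (hij : i ≠ j) (b : R)
    (u : ι → R) : transvection hij b • u = u + Pi.single i (b * u j) := by
  change (transvection hij b : Matrix ι ι R) *ᵥ u = _
  rw [transvection_coe, add_mulVec, one_mulVec, single_mulVec_eq]
  ext k
  simp [Pi.single_apply]

theorem exists_smul_single_eq_single {R : Type*} [CommRing R] (i k : ι) (c : R) :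
    ∃ t : SpecialLinearGroup ι R, t • (Pi.single i c : ι → R) = Pi.single k c := by
  rcases eq_or_ne k i with rfl | hki
  · exact ⟨1, one_smul _ _⟩
  refine ⟨transvection hki.symm (-1) * transvection hki 1, ?_⟩
  rw [mul_smul, transvection_smul, transvection_smul]
  ext l
  simp only [Pi.add_apply, Pi.single_apply]
  split_ifs <;> simp_all

/-- One step of the Euclidean algorithm on the entries of `u`. -/
theorem exists_smul_eq_of_l1Norm_lt {u : ι → ℤ} {i j : ι} (hij : i ≠ j) (hi : u i ≠ 0)
    (hle : (u i).natAbs ≤ (u j).natAbs) :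
    ∃ v : ι → ℤ, l1Norm v < l1Norm u ∧ ∃ t : SpecialLinearGroup ι ℤ, t • v = u := by
  set v := transvection hij.symm (-(u j / u i)) • u
  have hv : v = Function.update u j (u j % u i) := by
    ext k
    rcases eq_or_ne k j with rfl | hkj
    · simp [v, transvection_smul, Int.emod_def]
      ring
    · simp [v, transvection_smul, hkj]
  refine ⟨v, ?_, transvection hij.symm (u j / u i), ?_⟩
  · rw [hv]
    refine Finset.sum_lt_sum (fun k _ ↦ ?_) ⟨j, Finset.mem_univ j, ?_⟩
    · rcases eq_or_ne k j with rfl | hkj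
      · simpa using (Int.natAbs_emod_lt _ hi).le.trans hle
      · simp [hkj]
    · simpa using (Int.natAbs_emod_lt _ hi).trans_le hle
  · simp [v, ← mul_smul, transvection_mul_neg]

theorem exists_smul_single_eq (i₀ : ι) (u : ι → ℤ) :
    ∃ d : ℤ, d.natAbs ≤ l1Norm u ∧ ∃ t : SpecialLinearGroup ι ℤ, t • Pi.single i₀ d = u := by
  have : Nonempty ι := ⟨i₀⟩
  induction h : l1Norm u using Nat.strong_induction_on generalizing u with
  | _ n ih =>
    by_cases hpair : ∃ i j, i ≠ j ∧ u i ≠ 0 ∧ u j ≠ 0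
    · obtain ⟨i, j, hij, hi, hj⟩ := hpair
      wlog hle : (u i).natAbs ≤ (u j).natAbs generalizing i j
      · exact this j i hij.symm hj hi (by omega)
      obtain ⟨v, hv, t, rfl⟩ := exists_smul_eq_of_l1Norm_lt hij hi hle
      obtain ⟨d, hd, s, rfl⟩ := ih _ (h ▸ hv) v rfl
      exact ⟨d, by omega, t * s, mul_smul _ _ _⟩
    · push Not at hpair
      obtain ⟨k, hk⟩ := exists_eq_single_of_forall_ne hpair
      obtain ⟨t, ht⟩ := exists_smul_single_eq_single i₀ k (u k)
      exact ⟨u k, h ▸ natAbs_le_l1Norm u k, t, ht.trans hk.symm⟩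

theorem exists_eq_one_add_nsmul_of_mem_ker {N : ℕ} {γ : SpecialLinearGroup ι ℤ}
    (hγ : γ ∈ (map (Int.castRingHom (ZMod N))).ker) :
    ∃ Ψ : Matrix ι ι ℤ, (γ : Matrix ι ι ℤ) = 1 + N • Ψ := by
  have hcast : (γ : Matrix ι ι ℤ).map (Int.cast : ℤ → ZMod N) = 1 := by
    simpa [map_apply_coe] using
      congrArg (fun g : SpecialLinearGroup ι (ZMod N) ↦ (g : Matrix ι ι (ZMod N)))
        (MonoidHom.mem_ker.1 hγ)
  have hdvd : ∀ i j, (N : ℤ) ∣ (γ : Matrix ι ι ℤ) i j - (1 : Matrix ι ι ℤ) i j := by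
    intro i j
    have hij := congrFun₂ hcast i j
    rw [← ZMod.intCast_zmod_eq_zero_iff_dvd]
    rcases eq_or_ne i j with rfl | hne <;> simp_all
  refine ⟨Matrix.of fun i j ↦ ((γ : Matrix ι ι ℤ) i j - (1 : Matrix ι ι ℤ) i j) / N, ?_⟩
  ext i j
  simp [Int.mul_ediv_cancel' (hdvd i j)]

end Matrix.SpecialLinearGroup

section Transfer

variable {G V : Type*} [Group G] [AddCommGroup V] {A : Subgroup G} (e : A ≃* Multiplicative V)

def ofVec (v : V) : G := (e.symm (Multiplicative.ofAdd v) : G)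

theorem ofVec_mem (v : V) : ofVec e v ∈ A := (e.symm _).2

theorem ofVec_add (v w : V) : ofVec e (v + w) = ofVec e v * ofVec e w := by
  simp [ofVec]

theorem ofVec_zero : ofVec e 0 = 1 := by simp [ofVec]

theorem ofVec_zsmul (k : ℤ) (v : V) : ofVec e (k • v) = ofVec e v ^ k := by
  simp only [ofVec, ofAdd_zsmul, map_zpow, SubgroupClass.coe_zpow]

theorem ofVec_nsmul (k : ℕ) (v : V) : ofVec e (k • v) = ofVec e v ^ k := by
  simp only [ofVec, ofAdd_nsmul, map_pow, SubgroupClass.coe_pow]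

theorem ofVec_injective : Function.Injective (ofVec e) := fun _ _ h ↦
  Multiplicative.ofAdd.injective (e.symm.injective (Subtype.ext h))

theorem exists_ofVec_eq {a : G} (ha : a ∈ A) : ∃ v, ofVec e v = a :=
  ⟨(e ⟨a, ha⟩).toAdd, by simp [ofVec]⟩

theorem mk_mul_ofVec (g : G) (v : V) : ((g * ofVec e v : G) : G ⧸ A) = g :=
  QuotientGroup.mk_mul_of_mem g (ofVec_mem e v)

noncomputable def coord (g : G) : V :=
  (e ⟨(g : G ⧸ A).out⁻¹ * g, QuotientGroup.eq.1 (QuotientGroup.out_eq' _)⟩).toAdd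

theorem ofVec_coord (g : G) : ofVec e (coord e g) = (g : G ⧸ A).out⁻¹ * g := by
  simp [ofVec, coord]

theorem out_mul_ofVec_coord (g : G) : (g : G ⧸ A).out * ofVec e (coord e g) = g := by
  rw [ofVec_coord, mul_inv_cancel_left]

theorem coord_mul_ofVec (g : G) (v : V) : coord e (g * ofVec e v) = coord e g + v :=
  ofVec_injective e <| by rw [ofVec_add, ofVec_coord, ofVec_coord, mk_mul_ofVec, mul_assoc]

variable (sgn : G →* ℤˣ) (hsgn : ∀ g x : G, x ∈ A → g⁻¹ * x * g = x ^ (sgn g : ℤ))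

include hsgn in
theorem ofVec_mul_eq_mul_ofVec (g : G) (v : V) :
    ofVec e v * g = g * ofVec e ((sgn g : ℤ) • v) := by
  rw [ofVec_zsmul, ← hsgn g _ (ofVec_mem e v)]
  group

include e hsgn in
theorem le_ker_of_conj_eq_zpow [IsAddTorsionFree V] [Nontrivial V] : A ≤ sgn.ker := by
  intro a ha
  obtain ⟨w, rfl⟩ := exists_ofVec_eq e ha
  obtain ⟨v, hv⟩ := exists_ne (0 : V)
  refine (Int.units_eq_one_or _).resolve_right fun hneg ↦ hv ?_
  have hcomm := ofVec_mul_eq_mul_ofVec e sgn hsgn (ofVec e w) v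
  rw [hneg, ← ofVec_add, ← ofVec_add, Units.val_neg, Units.val_one, neg_one_zsmul] at hcomm
  have hvw := ofVec_injective e hcomm
  rw [add_comm v w, add_right_inj] at hvw
  refine nsmul_right_injective two_ne_zero (?_ : 2 • v = 2 • 0)
  rw [two_nsmul, smul_zero, ← eq_neg_iff_add_eq_zero, ← hvw]

theorem sgn_eq_of_mk_eq (hA : A ≤ sgn.ker) {x y : G}
    (h : (x : G ⧸ A) = y) : sgn x = sgn y := by
  have := hA (QuotientGroup.eq.1 h)
  rwa [MonoidHom.mem_ker, map_mul, map_inv, inv_mul_eq_one] at this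

variable [Fintype (G ⧸ A)]

noncomputable def transferCoord (g : G) : V :=
  ∑ r : G ⧸ A, (sgn r.out : ℤ) • coord e (g * r.out)

include hsgn in
theorem transferCoord_mul_ofVec (g : G) (v : V) :
    transferCoord e sgn (g * ofVec e v) = transferCoord e sgn g + Fintype.card (G ⧸ A) • v := by
  rw [transferCoord, transferCoord, ← Finset.card_univ, ← Finset.sum_const,
    ← Finset.sum_add_distrib]
  refine Finset.sum_congr rfl fun r _ ↦ ?_
  rw [mul_assoc, ofVec_mul_eq_mul_ofVec e sgn hsgn, ← mul_assoc, coord_mul_ofVec, smul_add,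
    smul_smul, ← Units.val_mul, Int.units_mul_self, Units.val_one, one_smul]

include hsgn in
theorem eq_of_mk_eq_of_transferCoord_eq [IsAddTorsionFree V] {x y : G}
    (hxy : (x : G ⧸ A) = y) (hu : transferCoord e sgn x = transferCoord e sgn y) : x = y := by
  obtain ⟨v, hv⟩ := exists_ofVec_eq e (QuotientGroup.eq.1 hxy)
  have hy : y = x * ofVec e v := by rw [hv, mul_inv_cancel_left]
  rw [hy, transferCoord_mul_ofVec e sgn hsgn, left_eq_add, smul_eq_zero] at hu
  rw [hy, hu.resolve_left Fintype.card_ne_zero, ofVec_zero, mul_one]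

noncomputable def twist (ψ : V →+ V) (g : G) : G := g * ofVec e (ψ (transferCoord e sgn g))

include hsgn in
theorem transferCoord_twist (ψ : V →+ V) (g : G) :
    transferCoord e sgn (twist e sgn ψ g) =
      transferCoord e sgn g + Fintype.card (G ⧸ A) • ψ (transferCoord e sgn g) :=
  transferCoord_mul_ofVec e sgn hsgn _ _

include hsgn in
theorem twist_twist {ψ ψ' : V →+ V}
    (hψ : ∀ v, ψ v + ψ' (v + Fintype.card (G ⧸ A) • ψ v) = 0) (g : G) :
    twist e sgn ψ' (twist e sgn ψ g) = g := by
  rw [twist, transferCoord_twist e sgn hsgn, twist, mul_assoc, ← ofVec_add, hψ, ofVec_zero,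
    mul_one]

variable [A.Normal] (hA : A ≤ sgn.ker)

include hA in
theorem transferCoord_mul (g h : G) :
    transferCoord e sgn (g * h) = (sgn h : ℤ) • transferCoord e sgn g + transferCoord e sgn h := by
  set q : G ⧸ A := ↑h
  have hmk (r : G ⧸ A) : ((h * r.out : G) : G ⧸ A) = q * r := by
    rw [QuotientGroup.mk_mul, QuotientGroup.out_eq']
  have hcoord (r : G ⧸ A) :
      coord e (g * h * r.out) = coord e (g * (q * r).out) + coord e (h * r.out) := by
    conv_lhs => rw [mul_assoc, ← out_mul_ofVec_coord e (h * r.out)]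
    rw [hmk, ← mul_assoc, coord_mul_ofVec]
  have hsign (r : G ⧸ A) : (sgn h : ℤ) * sgn (q * r).out = sgn r.out := by
    rw [sgn_eq_of_mk_eq sgn hA ((QuotientGroup.out_eq' _).trans (hmk r).symm), map_mul,
      ← Units.val_mul, ← mul_assoc, Int.units_mul_self, one_mul]
  calc transferCoord e sgn (g * h)
      = ∑ r, ((sgn h : ℤ) • ((sgn (q * r).out : ℤ) • coord e (g * (q * r).out))
          + (sgn r.out : ℤ) • coord e (h * r.out)) :=
        Finset.sum_congr rfl fun r _ ↦ by rw [hcoord, smul_add, smul_smul, hsign]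
    _ = _ := by
        rw [Finset.sum_add_distrib, ← Finset.smul_sum,
          Fintype.sum_equiv (Equiv.mulLeft q)
            (fun r ↦ (sgn (q * r).out : ℤ) • coord e (g * (q * r).out))
            (fun r ↦ (sgn r.out : ℤ) • coord e (g * r.out)) fun _ ↦ rfl]
        rfl

include hA in
theorem transferCoord_one : transferCoord e sgn 1 = 0 := by
  simpa using transferCoord_mul e sgn hA 1 1

include hsgn hA in
theorem twist_mul (ψ : V →+ V) (g h : G) :
    twist e sgn ψ (g * h) = twist e sgn ψ g * twist e sgn ψ h := by
  simp only [twist, transferCoord_mul e sgn hA, map_add, map_zsmul, ofVec_add]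
  rw [mul_assoc g (ofVec e _), ← mul_assoc (ofVec e _) h, ofVec_mul_eq_mul_ofVec e sgn hsgn h]
  simp only [mul_assoc]

end Transfer

namespace Matrix.SpecialLinearGroup

variable {ι : Type*} [Fintype ι] [DecidableEq ι]

theorem smul_eq_add_nsmul_mulVec {N : ℕ} {γ : SpecialLinearGroup ι ℤ} {Ψ : Matrix ι ι ℤ}
    (hΨ : (γ : Matrix ι ι ℤ) = 1 + N • Ψ) (v : ι → ℤ) : γ • v = v + N • Ψ *ᵥ v := by
  change (γ : Matrix ι ι ℤ) *ᵥ v = _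
  rw [hΨ, add_mulVec, one_mulVec, smul_mulVec]

theorem mulVec_add_mulVec_eq_zero {N : ℕ} (hN : N ≠ 0) {γ : SpecialLinearGroup ι ℤ}
    {Ψ Ψ' : Matrix ι ι ℤ} (hΨ : (γ : Matrix ι ι ℤ) = 1 + N • Ψ)
    (hΨ' : ((γ⁻¹ : SpecialLinearGroup ι ℤ) : Matrix ι ι ℤ) = 1 + N • Ψ') (v : ι → ℤ) :
    Ψ *ᵥ v + Ψ' *ᵥ (v + N • Ψ *ᵥ v) = 0 := by
  have hγ := smul_eq_add_nsmul_mulVec hΨ v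
  have hγ' := smul_eq_add_nsmul_mulVec hΨ' (γ • v)
  rw [inv_smul_smul] at hγ'
  refine nsmul_right_injective hN (?_ : N • _ = N • (0 : ι → ℤ))
  rw [smul_zero, smul_add, ← hγ, eq_sub_of_add_eq' hγ.symm, eq_sub_of_add_eq' hγ'.symm]
  abel

end Matrix.SpecialLinearGroup

section UpperBound

open Matrix
open scoped Pointwise

variable {G ι : Type*} [Group G] [Fintype ι] {A : Subgroup G} [A.Normal]
  [Fintype (G ⧸ A)] (e : A ≃* Multiplicative (ι → ℤ)) (sgn : G →* ℤˣ)
  (hsgn : ∀ g x : G, x ∈ A → g⁻¹ * x * g = x ^ (sgn g : ℤ)) (hA : A ≤ sgn.ker)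

include hA in
theorem exists_l1Norm_transferCoord_le (S : Finset G) :
    ∃ K, ∀ n, ∀ g ∈ wordBall (S : Set G) n, l1Norm (transferCoord e sgn g) ≤ K * n := by
  classical
  refine ⟨(S ∪ S⁻¹).sup fun x ↦ l1Norm (transferCoord e sgn x), fun n g hg ↦ ?_⟩
  refine le_mul_of_mem_wordBall (l1Norm ∘ transferCoord e sgn) ?_ (fun g h ↦ ?_)
    (fun x hx ↦ Finset.le_sup (by simpa using hx)) hg
  · simp [transferCoord_one e sgn hA, l1Norm]
  · simp only [Function.comp_apply, transferCoord_mul e sgn hA]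
    exact (l1Norm_add_le _ _).trans_eq (by rw [l1Norm_units_smul])

variable [DecidableEq ι]

include hsgn hA in
theorem exists_mulAut_apply_eq_of_mem_ker {γ : SpecialLinearGroup ι ℤ}
    (hγ : γ ∈ (SpecialLinearGroup.map (Int.castRingHom (ZMod (Fintype.card (G ⧸ A))))).ker)
    {g₁ g₂ : G} (hq : (g₁ : G ⧸ A) = g₂)
    (hu : transferCoord e sgn g₁ = γ • transferCoord e sgn g₂) :
    ∃ φ : MulAut G, φ g₂ = g₁ := by
  have hN : Fintype.card (G ⧸ A) ≠ 0 := Fintype.card_ne_zero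
  obtain ⟨Ψ, hΨ⟩ := SpecialLinearGroup.exists_eq_one_add_nsmul_of_mem_ker hγ
  obtain ⟨Ψ', hΨ'⟩ := SpecialLinearGroup.exists_eq_one_add_nsmul_of_mem_ker (inv_mem hγ)
  have hΨ'' : ((γ⁻¹⁻¹ : SpecialLinearGroup ι ℤ) : Matrix ι ι ℤ) = 1 + Fintype.card (G ⧸ A) • Ψ := by
    rwa [inv_inv]
  let φ : MulAut G :=
    { toFun := twist e sgn Ψ.mulVecLin.toAddMonoidHom
      invFun := twist e sgn Ψ'.mulVecLin.toAddMonoidHom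
      left_inv := twist_twist e sgn hsgn
        (SpecialLinearGroup.mulVec_add_mulVec_eq_zero hN hΨ hΨ')
      right_inv := twist_twist e sgn hsgn
        (SpecialLinearGroup.mulVec_add_mulVec_eq_zero hN hΨ' hΨ'')
      map_mul' := twist_mul e sgn hsgn hA _ }
  refine ⟨φ, eq_of_mk_eq_of_transferCoord_eq e sgn hsgn ?_ ?_⟩
  · exact (mk_mul_ofVec e _ _).trans hq.symm
  · change transferCoord e sgn (twist e sgn _ g₂) = _
    rw [hu, transferCoord_twist e sgn hsgn, SpecialLinearGroup.smul_eq_add_nsmul_mulVec hΨ]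
    rfl

include e hsgn hA in
theorem autGrowth_le_linear (i₀ : ι) (S : Finset G) :
    GrowthLe (autGrowth (S : Set G)) fun n ↦ n := by
  classical
  set N := Fintype.card (G ⧸ A)
  have : NeZero N := ⟨Fintype.card_ne_zero⟩
  set u := transferCoord e sgn
  obtain ⟨K, hK⟩ := exists_l1Norm_transferCoord_le e sgn hA S
  choose d hd t ht using SpecialLinearGroup.exists_smul_single_eq (ι := ι) i₀
  set c := Fintype.card (SpecialLinearGroup ι (ZMod N))
  refine growthLe_of_le_mul_add (a := N * c * (2 * K)) (b := N * c) fun n ↦ ?_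
  calc autGrowth (S : Set G) n
      ≤ (Finset.univ ×ˢ Finset.univ ×ˢ Finset.Icc (-((K * n : ℕ) : ℤ)) (K * n : ℕ)).card :=
        autGrowth_le_card S n
          (fun g ↦ ((g : G ⧸ A), SpecialLinearGroup.map (Int.castRingHom (ZMod N)) (t (u g)),
            d (u g))) _ ?_ ?_
    _ = N * c * (2 * K) * n + N * c := by
        rw [Finset.card_product, Finset.card_product, Finset.card_univ, Finset.card_univ,
          Int.card_Icc]
        have : (((K * n : ℕ) : ℤ) + 1 - -((K * n : ℕ) : ℤ)).toNat = 2 * (K * n) + 1 := by omega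
        rw [this]
        ring
  · intro g hg
    have := (hd (u g)).trans (hK n g hg)
    simp only [Finset.mem_product, Finset.mem_univ, Finset.mem_Icc, true_and]
    omega
  · intro g₁ _ g₂ _ hkey
    simp only [Prod.mk.injEq] at hkey
    obtain ⟨hq, hmod, hdeq⟩ := hkey
    refine exists_mulAut_apply_eq_of_mem_ker e sgn hsgn hA (γ := t (u g₁) * (t (u g₂))⁻¹) ?_ hq ?_
    · rw [MonoidHom.mem_ker, map_mul, map_inv, hmod, mul_inv_cancel]
    · rw [mul_smul, inv_smul_eq_iff.2 (ht (u g₂)).symm, ← hdeq, ht]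

end UpperBound

section RootIndex

variable {M M' : Type*} [Monoid M] [Monoid M']

/-- `sSup` of an unbounded set of naturals is `0`, so this is `0` when `g` is a `k`-th power for
unboundedly many `k`. -/
noncomputable def rootIndex (g : M) : ℕ := sSup {k | ∃ y : M, y ^ k = g}

theorem rootIndex_map (φ : M ≃* M') (g : M) : rootIndex (φ g) = rootIndex g := by
  refine congrArg sSup (Set.ext fun k ↦ ⟨?_, ?_⟩)
  · rintro ⟨y, hy⟩
    exact ⟨φ.symm y, by rw [← map_pow, hy, MulEquiv.symm_apply_apply]⟩
  · rintro ⟨y, hy⟩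
    exact ⟨φ y, by rw [← map_pow, hy]⟩

variable {g : M} {n : ℕ} (hn : n ≠ 0) (hdvd : ∀ k (y : M), y ^ k = g → k ∣ n)
include hn hdvd

theorem bddAbove_setOf_pow_eq : BddAbove {k | ∃ y : M, y ^ k = g} :=
  ⟨n, fun _ ⟨y, hy⟩ ↦ Nat.le_of_dvd (Nat.pos_of_ne_zero hn) (hdvd _ y hy)⟩

theorem le_rootIndex {k : ℕ} {y : M} (hy : y ^ k = g) : k ≤ rootIndex g :=
  le_csSup (bddAbove_setOf_pow_eq hn hdvd) ⟨y, hy⟩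

theorem rootIndex_dvd : rootIndex g ∣ n := by
  obtain ⟨y, hy⟩ := Nat.sSup_mem (s := {k | ∃ y : M, y ^ k = g}) ⟨1, g, pow_one g⟩
    (bddAbove_setOf_pow_eq hn hdvd)
  exact hdvd _ y hy

end RootIndex

theorem Finset.card_le_mul_card_image_of_dvd {t : Finset ℕ} {D : ℕ → ℕ} {N : ℕ} (hN : 0 < N)
    (h : ∀ j ∈ t, 0 < j ∧ j ≤ D j ∧ D j ∣ j * N) : t.card ≤ N * (t.image D).card := by
  refine Finset.card_le_mul_card_image t N fun v _ ↦ ?_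
  -- on the fibre `D j = v`, `j ↦ j * N / v` is injective with values in `[1, N]`
  have hfib : ∀ j ∈ t.filter (D · = v), 0 < j ∧ j ≤ v ∧ v ∣ j * N := by
    intro j hj
    obtain ⟨hjt, rfl⟩ := Finset.mem_filter.1 hj
    exact h j hjt
  calc (t.filter (D · = v)).card ≤ (Finset.Icc 1 N).card := by
        refine Finset.card_le_card_of_injOn (fun j ↦ j * N / v) (fun j hj ↦ ?_) ?_
        · obtain ⟨hj, hjv, hvj⟩ := hfib j hj
          have hv : 0 < v := hj.trans_le hjv
          rw [Finset.coe_Icc, Set.mem_Icc, Nat.one_le_div_iff hv, Nat.div_le_iff_le_mul_add_pred hv]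
          constructor
          · exact Nat.le_of_dvd (by positivity) hvj
          · nlinarith
        · intro j hj j' hj' hjj'
          obtain ⟨-, -, hvj⟩ := hfib j hj
          obtain ⟨-, -, hvj'⟩ := hfib j' hj'
          have := congrArg (· * v) hjj'
          simp only [Nat.div_mul_cancel hvj, Nat.div_mul_cancel hvj'] at this
          exact Nat.eq_of_mul_eq_mul_right hN this
    _ = N := by simp

section LowerBound

variable {G ι : Type*} [Group G] [DecidableEq ι] {A : Subgroup G} [A.Normal]
  (e : A ≃* Multiplicative (ι → ℤ)) (i₀ : ι)

theorem dvd_mul_index_of_pow_eq {y : G} {k j : ℕ}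
    (hy : y ^ k = ofVec e (Pi.single i₀ 1) ^ j) : k ∣ j * A.index := by
  obtain ⟨w, hw⟩ := exists_ofVec_eq e (Subgroup.pow_index_mem A y)
  have hkw : ofVec e (k • w) = ofVec e ((j * A.index) • Pi.single i₀ 1) := by
    rw [ofVec_nsmul, ofVec_nsmul, hw, ← pow_mul, mul_comm, pow_mul, hy, ← pow_mul]
  have := congrFun (ofVec_injective e hkw) i₀
  simp only [Pi.smul_apply, Pi.single_eq_same, nsmul_eq_mul, mul_one] at this
  exact Int.natCast_dvd_natCast.1 ⟨w i₀, by push_cast; exact this.symm⟩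

variable [A.FiniteIndex]

include e i₀ in
theorem linear_le_autGrowth (S : Finset G) (hS : Subgroup.closure (S : Set G) = ⊤) :
    GrowthLe (fun n ↦ n) (autGrowth (S : Set G)) := by
  set a := ofVec e (Pi.single i₀ 1)
  obtain ⟨L, haL⟩ := exists_mem_wordBall hS a
  set N := A.index
  have hN : 0 < N := Nat.pos_of_ne_zero A.index_ne_zero_of_finite
  refine ⟨N + L, by omega, fun n ↦ ?_⟩
  set R := (N + L) * n + (N + L)
  have hD (j : ℕ) (hj : j ∈ Finset.Icc 1 n) :
      0 < j ∧ j ≤ rootIndex (a ^ j) ∧ rootIndex (a ^ j) ∣ j * N := by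
    have hj0 : 0 < j := (Finset.mem_Icc.1 hj).1
    have hjN : j * N ≠ 0 := by positivity
    have hdvd (k : ℕ) (y : G) (hy : y ^ k = a ^ j) := dvd_mul_index_of_pow_eq e i₀ hy
    exact ⟨hj0, le_rootIndex hjN hdvd rfl, rootIndex_dvd hjN hdvd⟩
  have himage : (((Finset.Icc 1 n).image fun j ↦ rootIndex (a ^ j) : Finset ℕ) : Set ℕ) ⊆
      rootIndex '' wordBall (S : Set G) R := by
    intro _ hv
    obtain ⟨j, hj, rfl⟩ := Finset.mem_image.1 hv
    refine ⟨a ^ j, wordBall_mono _ ?_ (pow_mem_wordBall haL j), rfl⟩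
    calc j * L ≤ n * L := Nat.mul_le_mul_right _ (Finset.mem_Icc.1 hj).2
      _ ≤ (N + L) * n := by rw [mul_comm n]; exact Nat.mul_le_mul_right _ (Nat.le_add_left L N)
      _ ≤ R := Nat.le_add_right _ _
  calc n = (Finset.Icc 1 n).card := by simp
    _ ≤ N * ((Finset.Icc 1 n).image fun j ↦ rootIndex (a ^ j)).card :=
        Finset.card_le_mul_card_image_of_dvd hN hD
    _ ≤ N * (rootIndex '' wordBall (S : Set G) R).ncard := by
        rw [← Set.ncard_coe_finset]
        exact Nat.mul_le_mul_left _ (Set.ncard_le_ncard himage ((wordBall_finite S R).image _))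
    _ ≤ N * autGrowth (S : Set G) R := by
        gcongr
        exact ncard_image_wordBall_le_autGrowth S R rootIndex fun φ g ↦ rootIndex_map φ g
    _ ≤ (N + L) * autGrowth (S : Set G) R + (N + L) :=
        Nat.le_add_right_of_le (Nat.mul_le_mul_right _ (Nat.le_add_right N L))

end LowerBound

/-- if `G` has a finite-index normal subgroup `A ≅ ℤ^m` (`m ≥ 1`) on which
every conjugation acts as the identity or inversion, according to a homomorphism
`sgn : G → {±1}`, then the automorphic growth of `G` is linear. -/
theorem automorphic_growth_linear_of_sgn {G : Type*} [Group G]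
    (m : ℕ) (hm : 1 ≤ m) (A : Subgroup G) [A.Normal] [A.FiniteIndex]
    (e : A ≃* Multiplicative (Fin m → ℤ))
    (sgn : G →* ℤˣ) (hsgn : ∀ g x : G, x ∈ A → g⁻¹ * x * g = x ^ ((sgn g : ℤ))) :
    ∀ S : Finset G, Subgroup.closure (S : Set G) = ⊤ →
      GrowthEquiv (autGrowth (S : Set G)) (fun n => n) := by
  intro S hS
  have : Nonempty (Fin m) := ⟨⟨0, hm⟩⟩
  let _ := Fintype.ofFinite (G ⧸ A)
  exact ⟨autGrowth_le_linear e sgn hsgn (le_ker_of_conj_eq_zpow e sgn hsgn) ⟨0, hm⟩ S,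
    linear_le_autGrowth e ⟨0, hm⟩ S hS⟩
end

section
/- Let G be a group with finite generating set Σ, and let Ω ≤ Λ be subgroups of Aut(G) with the index [Λ : Ω] finite. Then for every n ∈ ℕ, the number of Λ-orbits of G containing an element of word length at most n is at most the number of Ω-orbits of G containing an element of word length at most n, which in turn is at most [Λ : Ω] times the number of Λ-orbits of G containing an element of word length at most n. In particular α_{G^Ω,Σ} ∼ α_{G^Λ,Σ}. -/
/-- The `Ω`-automorphic growth function for a subgroup `Ω ≤ Aut G`: the number of
`Ω`-orbits of `G` containing an element of word length at most `n`. -/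
noncomputable def subAutGrowth {G : Type*} [Group G] (Ω : Subgroup (MulAut G))
    (S : Set G) (n : ℕ) : ℕ :=
  Set.ncard (Quotient.mk (MulAction.orbitRel Ω G) '' wordBall S n)

/-! Every `Λ`-orbit is a union of `Ω`-orbits, so sending an `Ω`-orbit to the `Λ`-orbit containing
it maps the `Ω`-orbits meeting a ball onto the `Λ`-orbits meeting it. The fibre over the
`Λ`-orbit of `x` consists of the `Ω`-orbits of the points `ℓ⁻¹ • x`, and these depend only on the
coset `ℓ Ω ∈ Λ ⧸ Ω`; hence every fibre has at most `[Λ : Ω]` elements. Balls are finite and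
grow with the radius, so the two pointwise bounds give the equivalence of growth functions. -/

theorem Set.ncard_le_mul_ncard_image {α β : Type*} {f : α → β} {s : Set α} (hs : s.Finite)
    {k : ℕ} (hk : ∀ b, (f ⁻¹' {b}).encard ≤ k) : s.ncard ≤ k * (f '' s).ncard := by
  classical
  obtain ⟨t, rfl⟩ := hs.exists_finset_coe
  rw [Set.ncard_coe_finset, ← Finset.coe_image, Set.ncard_coe_finset]
  refine Finset.card_le_mul_card_image t k fun b _ => ENat.natCast_le_natCast.mp ?_
  calc (({a ∈ t | f a = b} : Finset α).card : ℕ∞) = (↑{a ∈ t | f a = b} : Set α).encard :=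
        (Set.encard_coe_eq_coe_finsetCard _).symm
    _ ≤ (f ⁻¹' {b}).encard := Set.encard_le_encard fun a ha => (Finset.mem_filter.mp ha).2
    _ ≤ k := hk b

theorem finite_wordBall {G : Type*} [Group G] {S : Set G} (hS : S.Finite) (n : ℕ) :
    (wordBall S n).Finite := by
  have : Finite {x : G | x ∈ S ∨ x⁻¹ ∈ S} := (hS.union hS.inv).to_subtype
  refine ((List.finite_length_le {x : G | x ∈ S ∨ x⁻¹ ∈ S} n).image
    fun l => (l.map Subtype.val).prod).subset ?_
  rintro g ⟨l, hmem, hlen, rfl⟩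
  lift l to List {x : G | x ∈ S ∨ x⁻¹ ∈ S} using hmem
  exact ⟨l, by simpa using hlen, rfl⟩

namespace MulAction

variable {M α : Type*} [Group M] [MulAction M α] {H K : Subgroup M}

def orbitRel.Quotient.mapOfLE (hHK : H ≤ K) : orbitRel.Quotient H α → orbitRel.Quotient K α :=
  Quotient.map' id fun _ _ ⟨g, hg⟩ => ⟨⟨g, hHK g.2⟩, hg⟩

theorem orbitRel.Quotient.preimage_mapOfLE_singleton_subset_range (hHK : H ≤ K) (x : α) :
    mapOfLE hHK ⁻¹' {⟦x⟧} ⊆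
      Set.range fun c : K ⧸ H.subgroupOf K => (⟦(c.out⁻¹ : K) • x⟧ : orbitRel.Quotient H α) := by
  intro q hq
  induction q using Quotient.inductionOn' with | h y => ?_
  obtain ⟨k, rfl⟩ : ∃ k : K, k • x = y := Quotient.exact hq
  obtain ⟨h, hh⟩ := QuotientGroup.mk_out_eq_mul (H.subgroupOf K) k⁻¹
  refine ⟨(k⁻¹ : K), Quotient.sound ⟨⟨((h : K) : M)⁻¹, H.inv_mem h.2⟩, ?_⟩⟩
  show ((h : K) : M)⁻¹ • ((k : M) • x) = ((((k⁻¹ : K) : K ⧸ H.subgroupOf K).out⁻¹ : K) : M) • x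
  rw [hh, smul_smul]
  simp

theorem orbitRel.Quotient.encard_preimage_mapOfLE_singleton_le (hHK : H ≤ K)
    [(H.subgroupOf K).FiniteIndex] (q : orbitRel.Quotient K α) :
    (mapOfLE hHK ⁻¹' {q}).encard ≤ (H.subgroupOf K).index := by
  induction q using Quotient.inductionOn' with | h x => ?_
  calc _ ≤ (Set.range _).encard :=
        Set.encard_le_encard (preimage_mapOfLE_singleton_subset_range hHK x)
    _ ≤ ENat.card (K ⧸ H.subgroupOf K) := by
        rw [← Set.image_univ, ← Set.encard_univ]
        exact Set.encard_image_le _ _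
    _ = (H.subgroupOf K).index := by
        rw [ENat.card_eq_coe_natCard, Subgroup.index]

theorem orbitRel.Quotient.mapOfLE_comp_mk (hHK : H ≤ K) :
    mapOfLE hHK ∘ Quotient.mk (orbitRel H α) = Quotient.mk (orbitRel K α) :=
  rfl

theorem ncard_image_mk_orbitRel_le_of_le (hHK : H ≤ K) {s : Set α} (hs : s.Finite) :
    (Quotient.mk (orbitRel K α) '' s).ncard ≤ (Quotient.mk (orbitRel H α) '' s).ncard := by
  rw [← orbitRel.Quotient.mapOfLE_comp_mk hHK, Set.image_comp]
  exact Set.ncard_image_le (hs.image _)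

theorem ncard_image_mk_orbitRel_le_index_mul (hHK : H ≤ K) [(H.subgroupOf K).FiniteIndex]
    {s : Set α} (hs : s.Finite) :
    (Quotient.mk (orbitRel H α) '' s).ncard ≤
      (H.subgroupOf K).index * (Quotient.mk (orbitRel K α) '' s).ncard := by
  rw [← orbitRel.Quotient.mapOfLE_comp_mk hHK, Set.image_comp]
  exact Set.ncard_le_mul_ncard_image (hs.image _)
    (orbitRel.Quotient.encard_preimage_mapOfLE_singleton_le hHK)

end MulAction

theorem wordBall_mono_s13 {G : Type*} [Group G] (S : Set G) : Monotone (wordBall S) :=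
  fun _ _ hmn _ ⟨l, hmem, hlen, hprod⟩ => ⟨l, hmem, hlen.trans hmn, hprod⟩

theorem subAutGrowth_mono {G : Type*} [Group G] (Ω : Subgroup (MulAut G)) {S : Set G}
    (hS : S.Finite) : Monotone (subAutGrowth Ω S) :=
  fun _ n hmn => Set.ncard_le_ncard (Set.image_mono (wordBall_mono_s13 S hmn))
    ((finite_wordBall hS n).image _)

theorem GrowthLe.of_le_mul {f g : ℕ → ℕ} (hg : Monotone g) (c : ℕ) (hfg : ∀ n, f n ≤ c * g n) :
    GrowthLe f g :=
  ⟨c + 1, c.succ_pos, fun n =>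
    calc f n ≤ c * g n := hfg n
      _ ≤ (c + 1) * g ((c + 1) * n + (c + 1)) :=
          Nat.mul_le_mul c.le_succ (hg (by nlinarith))
      _ ≤ _ := Nat.le_add_right _ _⟩

theorem automorphic_growth_finite_index_aut_subgroup_general {G : Type*} [Group G]
    (S : Finset G)
    (Ω Λ : Subgroup (MulAut G)) (hΩΛ : Ω ≤ Λ)
    (hfin : (Ω.subgroupOf Λ).FiniteIndex) :
    (∀ n : ℕ,
      subAutGrowth Λ (S : Set G) n ≤ subAutGrowth Ω (S : Set G) n ∧
      subAutGrowth Ω (S : Set G) n ≤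
        (Ω.subgroupOf Λ).index * subAutGrowth Λ (S : Set G) n) ∧
    GrowthEquiv (subAutGrowth Ω (S : Set G)) (subAutGrowth Λ (S : Set G)) := by
  have hS := S.finite_toSet
  have hle : ∀ n, subAutGrowth Λ (S : Set G) n ≤ subAutGrowth Ω (S : Set G) n := fun n =>
    MulAction.ncard_image_mk_orbitRel_le_of_le hΩΛ (finite_wordBall hS n)
  have hindex : ∀ n, subAutGrowth Ω (S : Set G) n ≤
      (Ω.subgroupOf Λ).index * subAutGrowth Λ (S : Set G) n := fun n =>
    MulAction.ncard_image_mk_orbitRel_le_index_mul hΩΛ (finite_wordBall hS n)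
  exact ⟨fun n => ⟨hle n, hindex n⟩,
    .of_le_mul (subAutGrowth_mono Λ hS) _ hindex,
    .of_le_mul (subAutGrowth_mono Ω hS) 1 fun n => (hle n).trans_eq (one_mul _).symm⟩

/-- if `Ω ≤ Λ ≤ Aut G` with `[Λ : Ω]` finite, then the `Ω`- and
`Λ`-automorphic growth functions agree up to the index, and are equivalent. -/
theorem automorphic_growth_finite_index_aut_subgroup {G : Type*} [Group G]
    (S : Finset G) (hS : Subgroup.closure (S : Set G) = ⊤)
    (Ω Λ : Subgroup (MulAut G)) (hΩΛ : Ω ≤ Λ)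
    (hfin : (Ω.subgroupOf Λ).FiniteIndex) :
    (∀ n : ℕ,
      subAutGrowth Λ (S : Set G) n ≤ subAutGrowth Ω (S : Set G) n ∧
      subAutGrowth Ω (S : Set G) n ≤
        (Ω.subgroupOf Λ).index * subAutGrowth Λ (S : Set G) n) ∧
    GrowthEquiv (subAutGrowth Ω (S : Set G)) (subAutGrowth Λ (S : Set G)) :=
  automorphic_growth_finite_index_aut_subgroup_general S Ω Λ hΩΛ hfin
end

section
/- Let G be a finitely generated group and let H be a subgroup of G of finite index. Then the subgroup K = {φ ∈ Aut(G) : φ(H) = H} of Aut(G) has finite index in Aut(G). -/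
/-!
Automorphisms preserve the index, so the `Aut G`-orbit of `H` consists of subgroups of index
`n = [G : H]`. Each such subgroup is the stabiliser of a point under some homomorphism
`G →* Perm (Fin n)` (the action on its cosets), and a finitely generated group has only finitely
many of those. A finite orbit means a stabiliser of finite index.
-/

open Pointwise

theorem MonoidHom.finite_of_fg {G M : Type*} [Group G] [Group.FG G] [Monoid M] [Finite M] :
    Finite (G →* M) := by
  obtain ⟨S, hS⟩ := Group.FG.out (G := G)
  refine Finite.of_injective (fun ρ : G →* M => fun s : S => ρ s) fun ρ ρ' h => ?_
  exact MonoidHom.eq_of_eqOn_dense hS fun x hx => congrFun h ⟨x, hx⟩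

namespace Subgroup

theorem exists_comap_stabilizer_eq {G X : Type*} [Group G] (K : Subgroup G) (e : G ⧸ K ≃ X) :
    ∃ (ρ : G →* Equiv.Perm X) (x : X), (MulAction.stabilizer (Equiv.Perm X) x).comap ρ = K := by
  refine ⟨e.permCongrHom.toMonoidHom.comp (MulAction.toPermHom G (G ⧸ K)), e (1 : G), ?_⟩
  ext g
  simp [Equiv.Perm.smul_def, Equiv.permCongr_apply, QuotientGroup.eq]

theorem finite_setOf_index_eq {G : Type*} [Group G] [Group.FG G] {n : ℕ} (hn : n ≠ 0) :
    {K : Subgroup G | K.index = n}.Finite := by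
  have : Finite (G →* Equiv.Perm (Fin n)) := MonoidHom.finite_of_fg
  refine (Set.finite_range fun p : (G →* Equiv.Perm (Fin n)) × Fin n =>
    (MulAction.stabilizer (Equiv.Perm (Fin n)) p.2).comap p.1).subset fun K hK => ?_
  have : K.FiniteIndex := finiteIndex_iff.mpr (hK ▸ hn)
  obtain ⟨ρ, x, hρx⟩ := K.exists_comap_stabilizer_eq (Finite.equivFinOfCardEq hK)
  exact ⟨(ρ, x), hρx⟩

theorem finite_orbit_mulAut {G : Type*} [Group G] [Group.FG G] (H : Subgroup G)
    [H.FiniteIndex] : (MulAction.orbit (MulAut G) H).Finite := by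
  refine (finite_setOf_index_eq (FiniteIndex.index_ne_zero (H := H))).subset ?_
  rintro _ ⟨φ, rfl⟩
  exact index_map_equiv H φ

end Subgroup

/-- if `H` is a finite-index subgroup of a finitely generated group
`G`, then the setwise stabiliser `K = {φ ∈ Aut G : φ(H) = H}` is a subgroup of
`Aut G` of finite index. -/
theorem aut_stabiliser_of_finite_index_subgroup_has_finite_index
    {G : Type*} [Group G]
    (hfg : ∃ S : Finset G, Subgroup.closure (S : Set G) = ⊤)
    (H : Subgroup G) (hH : H.FiniteIndex) :
    ∃ K : Subgroup (MulAut G),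
      (∀ φ : MulAut G, φ ∈ K ↔ Subgroup.map φ.toMonoidHom H = H) ∧
      K.FiniteIndex := by
  have : Group.FG G := ⟨hfg⟩
  refine ⟨MulAction.stabilizer (MulAut G) H, fun φ => Iff.rfl, ?_⟩
  rw [Subgroup.finiteIndex_iff, MulAction.index_stabilizer]
  exact Set.ncard_ne_zero_of_mem (MulAction.mem_orbit_self H) H.finite_orbit_mulAut
end

section
/- Let M ∈ GL₂(ℤ) have finite order (M^k = 1 for some k ≥ 1). Then exactly one of the following holds: (1) M is a scalar matrix, i.e. M = I or M = −I, in which case its centralizer in GL₂(ℤ) is all of GL₂(ℤ); or (2) the centralizer C of M in GL₂(ℤ) is abelian and virtually cyclic, i.e. C is commutative and there exists a cyclic subgroup of C of finite index in C. -/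
/-!
If `M ∈ GL₂(ℤ)` has trace `t` and determinant `e`, Cayley–Hamilton gives
`M^k = U_k M - e U_{k-1} I` with `U` the Lucas sequence `U(t, e)`. Unless `e = 1, t² ≤ 1` or
`e = -1, t = 0`, the sequence `U_k` never vanishes for `k ≥ 1`, so `M^k = I` forces `M` to be
scalar, i.e. `M = ±I`, and then the centralizer is all of the nonabelian group `GL₂(ℤ)`.

If `M` is not scalar, one of `M₀₁, M₁₀, M₀₀ - M₁₁` is a nonzero `n` with `n B = X I + Y M` for
every `B` commuting with `M`. So the centralizer is commutative, and taking determinants,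
`X² + t X Y + e Y² = ± n²`; for the admissible `(t, e)` this form is definite or a product of two
linear forms, which bounds `X` and `Y`. Hence the centralizer is finite, and its trivial subgroup
is cyclic of finite index.
-/

open Matrix

def lucasU (P Q : ℤ) : ℕ → ℤ
  | 0 => 0
  | 1 => 1
  | n + 2 => P * lucasU P Q (n + 1) - Q * lucasU P Q n

theorem lucasU_neg (P Q : ℤ) (n : ℕ) : lucasU (-P) Q n = (-1) ^ (n + 1) * lucasU P Q n := by
  induction n using Nat.twoStepInduction with
  | zero => simp [lucasU]
  | one => simp [lucasU]
  | more n ih₀ ih₁ =>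
    simp only [lucasU, ih₀, ih₁]
    ring

theorem lucasU_succ_pos {P Q : ℤ} (h : (Q = 1 ∧ 2 ≤ P) ∨ (Q = -1 ∧ 1 ≤ P)) (n : ℕ) :
    0 < lucasU P Q (n + 1) := by
  have mono : ∀ n, 0 ≤ lucasU P Q n ∧ 1 ≤ lucasU P Q (n + 1) ∧
      lucasU P Q n ≤ lucasU P Q (n + 1) := by
    intro n
    induction n with
    | zero => simp [lucasU]
    | succ n ih =>
      obtain ⟨h₀, h₁, hle⟩ := ih
      have hstep : lucasU P Q (n + 1) ≤ lucasU P Q (n + 1 + 1) := by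
        rw [lucasU]
        rcases h with ⟨rfl, hP⟩ | ⟨rfl, hP⟩ <;> nlinarith
      exact ⟨by omega, by omega, hstep⟩
  exact (mono n).2.1

theorem lucasU_succ_ne_zero {P Q : ℤ} (h : (Q = 1 ∧ 4 ≤ P ^ 2) ∨ (Q = -1 ∧ P ≠ 0)) (n : ℕ) :
    lucasU P Q (n + 1) ≠ 0 := by
  rcases le_or_gt 0 P with hP | hP
  · refine (lucasU_succ_pos ?_ n).ne'
    rcases h with ⟨hQ, h4⟩ | ⟨hQ, h0⟩
    · exact Or.inl ⟨hQ, by nlinarith⟩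
    · exact Or.inr ⟨hQ, by omega⟩
  · rw [← neg_neg P, lucasU_neg]
    refine mul_ne_zero (pow_ne_zero _ (by norm_num)) (lucasU_succ_pos ?_ n).ne'
    rcases h with ⟨hQ, h4⟩ | ⟨hQ, h0⟩
    · exact Or.inl ⟨hQ, by nlinarith⟩
    · exact Or.inr ⟨hQ, by omega⟩

theorem pow_succ_eq_lucasU {A : Type*} [Ring A] {x : A} {P Q : ℤ}
    (hx : x * x = P • x - Q • 1) (n : ℕ) :
    x ^ (n + 1) = lucasU P Q (n + 1) • x - (Q * lucasU P Q n) • 1 := by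
  induction n with
  | zero => simp [lucasU]
  | succ n ih =>
    rw [pow_succ, ih, sub_mul, smul_mul_assoc, smul_mul_assoc, one_mul, hx]
    simp only [lucasU]
    module

theorem abs_le_of_quadratic_form_eq {t e X Y m : ℤ} (hte : (e = 1 ∧ t ^ 2 ≤ 1) ∨ (e = -1 ∧ t = 0))
    (hm : m ≠ 0) (h : X ^ 2 + t * X * Y + e * Y ^ 2 = m) : |X| ≤ 2 * |m| ∧ |Y| ≤ 2 * |m| := by
  rcases hte with ⟨rfl, ht⟩ | ⟨rfl, rfl⟩
  · have hsq : X ^ 2 + Y ^ 2 ≤ 2 * m := by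
      obtain ⟨h₁, h₂⟩ : -1 ≤ t ∧ t ≤ 1 := by constructor <;> nlinarith
      interval_cases t <;> nlinarith [sq_nonneg (X + Y), sq_nonneg (X - Y)]
    have hX := Int.natAbs_le_self_sq X
    have hY := Int.natAbs_le_self_sq Y
    rw [Int.natCast_natAbs] at hX hY
    constructor <;> nlinarith [le_abs_self m, sq_nonneg X, sq_nonneg Y]
  · have hfac : (X - Y) * (X + Y) = m := by linear_combination h
    have h₁ : |X - Y| ≤ |m| := by
      rw [← hfac, abs_mul]
      exact le_mul_of_one_le_right (abs_nonneg _)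
        (Int.one_le_abs (right_ne_zero_of_mul (hfac ▸ hm)))
    have h₂ : |X + Y| ≤ |m| := by
      rw [← hfac, abs_mul]
      exact le_mul_of_one_le_left (abs_nonneg _)
        (Int.one_le_abs (left_ne_zero_of_mul (hfac ▸ hm)))
    rw [abs_le] at h₁ h₂
    constructor <;> rw [abs_le] <;> constructor <;> linarith [abs_nonneg m]

namespace Matrix

variable {R : Type*} [CommRing R]

theorem cayley_hamilton_fin_two (M : Matrix (Fin 2) (Fin 2) R) :
    M * M = M.trace • M - M.det • 1 := by
  ext i j
  fin_cases i <;> fin_cases j <;> simp [mul_apply, trace_fin_two, det_fin_two] <;> ring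

theorem det_smul_one_add_smul_fin_two (M : Matrix (Fin 2) (Fin 2) R) (X Y : R) :
    (X • 1 + Y • M).det = X ^ 2 + M.trace * X * Y + M.det * Y ^ 2 := by
  simp only [det_fin_two, trace_fin_two, add_apply, smul_apply, smul_eq_mul, one_apply_eq,
    one_apply_ne zero_ne_one, one_apply_ne one_ne_zero, mul_one, mul_zero, zero_add]
  ring

theorem mem_range_scalar_of_smul_eq_smul_one [NoZeroDivisors R] {M : Matrix (Fin 2) (Fin 2) R}
    {u c : R} (hu : u ≠ 0) (h : u • M = c • 1) : M ∈ Set.range (scalar (Fin 2)) := by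
  have h₀₁ : u * M 0 1 = 0 := by simpa using congrFun₂ h 0 1
  have h₁₀ : u * M 1 0 = 0 := by simpa using congrFun₂ h 1 0
  have h₀₀ : u * M 0 0 = c := by simpa using congrFun₂ h 0 0
  have h₁₁ : u * M 1 1 = c := by simpa using congrFun₂ h 1 1
  refine ⟨M 0 0, ?_⟩
  ext i j
  fin_cases i <;> fin_cases j <;> simp [(mul_eq_zero.mp h₀₁).resolve_left hu,
    (mul_eq_zero.mp h₁₀).resolve_left hu, mul_left_cancel₀ hu (h₁₁.trans h₀₀.symm)]

theorem smul_eq_smul_one_add_smul_fin_two {M B : Matrix (Fin 2) (Fin 2) R} {n X Y : R}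
    (h₀₀ : n * B 0 0 = X + Y * M 0 0) (h₀₁ : n * B 0 1 = Y * M 0 1)
    (h₁₀ : n * B 1 0 = Y * M 1 0) (h₁₁ : n * B 1 1 = X + Y * M 1 1) :
    n • B = X • 1 + Y • M := by
  ext i j
  fin_cases i <;> fin_cases j <;> simpa

theorem entries_of_commute_fin_two {M B : Matrix (Fin 2) (Fin 2) R} (h : Commute M B) :
    M 1 0 * B 0 1 = M 0 1 * B 1 0 ∧ M 0 1 * (B 0 0 - B 1 1) = B 0 1 * (M 0 0 - M 1 1) ∧
      M 1 0 * (B 0 0 - B 1 1) = B 1 0 * (M 0 0 - M 1 1) := by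
  have e : ∀ i j, (M * B) i j = (B * M) i j := fun i j => by rw [h.eq]
  have e₀₀ := e 0 0
  have e₀₁ := e 0 1
  have e₁₀ := e 1 0
  simp only [mul_apply, Fin.sum_univ_two] at e₀₀ e₀₁ e₁₀
  exact ⟨by linear_combination -e₀₀, by linear_combination -e₀₁, by linear_combination e₁₀⟩

theorem exists_ne_zero_smul_eq_of_commute_fin_two {M : Matrix (Fin 2) (Fin 2) R}
    (hM : M ∉ Set.range (scalar (Fin 2))) :
    ∃ n : R, n ≠ 0 ∧ ∀ B, Commute M B → ∃ X Y : R, n • B = X • 1 + Y • M := by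
  have hcoord : M 0 1 ≠ 0 ∨ M 1 0 ≠ 0 ∨ M 0 0 - M 1 1 ≠ 0 := by
    by_contra! h
    refine hM ⟨M 0 0, ?_⟩
    ext i j
    fin_cases i <;> fin_cases j <;> simp [h.1, h.2.1, sub_eq_zero.mp h.2.2]
  rcases hcoord with h | h | h
  · refine ⟨M 0 1, h, fun B hB => ⟨B 0 0 * M 0 1 - M 0 0 * B 0 1, B 0 1, ?_⟩⟩
    obtain ⟨r₁, r₂, -⟩ := entries_of_commute_fin_two hB
    exact smul_eq_smul_one_add_smul_fin_two (by ring) (by ring) (by linear_combination -r₁)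
      (by linear_combination -r₂)
  · refine ⟨M 1 0, h, fun B hB => ⟨B 0 0 * M 1 0 - M 0 0 * B 1 0, B 1 0, ?_⟩⟩
    obtain ⟨r₁, -, r₃⟩ := entries_of_commute_fin_two hB
    exact smul_eq_smul_one_add_smul_fin_two (by ring) (by linear_combination r₁) (by ring)
      (by linear_combination -r₃)
  · refine ⟨M 0 0 - M 1 1, h, fun B hB => ⟨M 0 0 * B 1 1 - M 1 1 * B 0 0, B 0 0 - B 1 1, ?_⟩⟩
    obtain ⟨-, r₂, r₃⟩ := entries_of_commute_fin_two hB
    exact smul_eq_smul_one_add_smul_fin_two (by ring) (by linear_combination -r₂)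
      (by linear_combination -r₃) (by ring)

theorem commute_of_commute_of_commute_fin_two [IsDomain R] {M B C : Matrix (Fin 2) (Fin 2) R}
    (hM : M ∉ Set.range (scalar (Fin 2))) (hB : Commute M B) (hC : Commute M C) :
    Commute B C := by
  obtain ⟨n, hn, hpoly⟩ := exists_ne_zero_smul_eq_of_commute_fin_two hM
  obtain ⟨X, Y, hXY⟩ := hpoly B hB
  obtain ⟨X', Y', hXY'⟩ := hpoly C hC
  have hpolyM : Commute (X • 1 + Y • M) M :=
    ((Commute.one_left M).smul_left X).add_left ((Commute.refl M).smul_left Y)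
  have hnn : Commute (n • B) (n • C) := by
    rw [hXY, hXY']
    exact ((Commute.one_right _).smul_right X').add_right (hpolyM.smul_right Y')
  have := hnn.eq
  rw [smul_mul_smul_comm, smul_mul_smul_comm] at this
  exact smul_right_injective _ (mul_ne_zero hn hn) this

theorem det_and_trace_of_isOfFinOrder {M : Matrix (Fin 2) (Fin 2) ℤ} (hdet : IsUnit M.det)
    (hfin : IsOfFinOrder M) (hM : M ∉ Set.range (scalar (Fin 2))) :
    (M.det = 1 ∧ M.trace ^ 2 ≤ 1) ∨ (M.det = -1 ∧ M.trace = 0) := by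
  obtain ⟨k, hk, hMk⟩ := isOfFinOrder_iff_pow_eq_one.mp hfin
  obtain ⟨n, rfl⟩ := Nat.exists_eq_add_one.mpr hk
  by_contra hte
  have hU : lucasU M.trace M.det (n + 1) ≠ 0 := by
    refine lucasU_succ_ne_zero ?_ n
    rcases Int.isUnit_iff.mp hdet with h | h
    · have ht : 1 < M.trace ^ 2 := not_le.mp fun ht => hte (Or.inl ⟨h, ht⟩)
      have : M.trace ≤ -2 ∨ (-1 ≤ M.trace ∧ M.trace ≤ 1) ∨ 2 ≤ M.trace := by omega
      exact Or.inl ⟨h, by rcases this with h₁ | h₁ | h₁ <;> nlinarith⟩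
    · exact Or.inr ⟨h, fun ht => hte (Or.inr ⟨h, ht⟩)⟩
  have hpow := pow_succ_eq_lucasU M.cayley_hamilton_fin_two n
  rw [hMk] at hpow
  refine hM (mem_range_scalar_of_smul_eq_smul_one hU (c := 1 + M.det * lucasU M.trace M.det n) ?_)
  rw [add_smul, one_smul]
  exact sub_eq_iff_eq_add.mp hpow.symm

theorem finite_setOf_isUnit_det_commute {M : Matrix (Fin 2) (Fin 2) ℤ}
    (hM : M ∉ Set.range (scalar (Fin 2)))
    (hte : (M.det = 1 ∧ M.trace ^ 2 ≤ 1) ∨ (M.det = -1 ∧ M.trace = 0)) :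
    {B : Matrix (Fin 2) (Fin 2) ℤ | IsUnit B.det ∧ Commute M B}.Finite := by
  obtain ⟨n, hn, hpoly⟩ := exists_ne_zero_smul_eq_of_commute_fin_two hM
  set K := 2 * n ^ 2
  refine Set.Finite.of_finite_image (f := (n • ·)) ?_ (smul_right_injective _ hn).injOn
  refine (((Set.finite_Icc (-K) K).prod (Set.finite_Icc (-K) K)).image
    fun p => p.1 • (1 : Matrix (Fin 2) (Fin 2) ℤ) + p.2 • M).subset ?_
  rintro _ ⟨B, ⟨hdet, hB⟩, rfl⟩
  obtain ⟨X, Y, hXY⟩ := hpoly B hB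
  have hform : X ^ 2 + M.trace * X * Y + M.det * Y ^ 2 = n ^ 2 * B.det := by
    rw [← det_smul_one_add_smul_fin_two, ← hXY, det_smul, Fintype.card_fin]
  have habs : |n ^ 2 * B.det| = n ^ 2 := by
    rw [abs_mul, Int.isUnit_iff_abs_eq.mp hdet, mul_one, abs_sq]
  obtain ⟨hX, hY⟩ := abs_le_of_quadratic_form_eq hte
    (mul_ne_zero (pow_ne_zero 2 hn) hdet.ne_zero) hform
  rw [habs] at hX hY
  exact ⟨(X, Y), ⟨abs_le.mp hX, abs_le.mp hY⟩, hXY.symm⟩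

end Matrix

namespace Matrix.GeneralLinearGroup

theorem val_eq_one_or_neg_one_of_mem_range_scalar {M : GL (Fin 2) ℤ}
    (hM : (M : Matrix (Fin 2) (Fin 2) ℤ) ∈ Set.range (Matrix.scalar (Fin 2))) :
    (M : Matrix (Fin 2) (Fin 2) ℤ) = 1 ∨ (M : Matrix (Fin 2) (Fin 2) ℤ) = -1 := by
  obtain ⟨a, ha⟩ := hM
  have hdet := isUnits_det_units M
  rw [← ha] at hdet ⊢
  have : IsUnit a := (isUnit_pow_iff two_ne_zero).mp <| by
    simpa only [scalar_apply, det_diagonal, Fin.prod_univ_two, sq] using hdet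
  rcases Int.isUnit_iff.mp this with rfl | rfl <;> simp

theorem centralizer_eq_top_of_val_eq_one_or_neg_one {M : GL (Fin 2) ℤ}
    (hM : (M : Matrix (Fin 2) (Fin 2) ℤ) = 1 ∨ (M : Matrix (Fin 2) (Fin 2) ℤ) = -1) :
    Subgroup.centralizer {M} = ⊤ := by
  refine Subgroup.centralizer_eq_top_iff_subset.mpr (Set.singleton_subset_iff.mpr ?_)
  refine Subgroup.mem_center_iff.mpr fun g => Units.ext ?_
  rcases hM with h | h <;> simp [h]

theorem exists_mul_ne_mul : ∃ g h : GL (Fin 2) ℤ, g * h ≠ h * g := by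
  refine ⟨nonsingInvUnit !![1, 1; 0, 1] (by simp), nonsingInvUnit !![1, 0; 1, 1] (by simp),
    fun h => ?_⟩
  have := congrArg (fun g : GL (Fin 2) ℤ => (g : Matrix (Fin 2) (Fin 2) ℤ) 0 0) h
  change (!![1, 1; 0, 1] * !![1, 0; 1, 1] : Matrix (Fin 2) (Fin 2) ℤ) 0 0 =
    (!![1, 0; 1, 1] * !![1, 1; 0, 1] : Matrix (Fin 2) (Fin 2) ℤ) 0 0 at this
  simp at this

theorem commute_of_mem_centralizer {M A B : GL (Fin 2) ℤ}
    (hM : (M : Matrix (Fin 2) (Fin 2) ℤ) ∉ Set.range (Matrix.scalar (Fin 2)))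
    (hA : A ∈ Subgroup.centralizer {M}) (hB : B ∈ Subgroup.centralizer {M}) : Commute A B :=
  Commute.units_val_iff.mp <| commute_of_commute_of_commute_fin_two hM
    (Commute.units_val (Subgroup.mem_centralizer_singleton_iff.mp hA).symm)
    (Commute.units_val (Subgroup.mem_centralizer_singleton_iff.mp hB).symm)

theorem finite_centralizer {M : GL (Fin 2) ℤ} (hfin : IsOfFinOrder M)
    (hM : (M : Matrix (Fin 2) (Fin 2) ℤ) ∉ Set.range (Matrix.scalar (Fin 2))) :
    Finite (Subgroup.centralizer {M}) := by
  have hte := det_and_trace_of_isOfFinOrder (isUnits_det_units M)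
    ((Units.coeHom _).isOfFinOrder hfin) hM
  refine Set.Finite.to_subtype <| Set.Finite.of_finite_image
    ((finite_setOf_isUnit_det_commute hM hte).subset ?_) Units.val_injective.injOn
  rintro _ ⟨B, hB, rfl⟩
  exact ⟨isUnits_det_units B,
    Commute.units_val (Subgroup.mem_centralizer_singleton_iff.mp hB).symm⟩

end Matrix.GeneralLinearGroup

/-- if `M ∈ GL₂(ℤ)` has finite order, then exactly one of the
following holds: (1) `M` is a scalar matrix `±I` and its centraliser is all of
`GL₂(ℤ)`, or (2) the centraliser of `M` is abelian and virtually cyclic. -/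
theorem GL2Z_finite_order_centralizer (M : GL (Fin 2) ℤ) (hM : IsOfFinOrder M) :
    Xor'
      ((((M : Matrix (Fin 2) (Fin 2) ℤ) = 1 ∨ (M : Matrix (Fin 2) (Fin 2) ℤ) = -1)) ∧
        Subgroup.centralizer {M} = (⊤ : Subgroup (GL (Fin 2) ℤ)))
      ((∀ a ∈ Subgroup.centralizer {M}, ∀ b ∈ Subgroup.centralizer {M}, a * b = b * a) ∧
        ∃ D : Subgroup (Subgroup.centralizer {M} : Subgroup (GL (Fin 2) ℤ)),
          IsCyclic D ∧ D.FiniteIndex) := by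
  by_cases hscal : (M : Matrix (Fin 2) (Fin 2) ℤ) = 1 ∨ (M : Matrix (Fin 2) (Fin 2) ℤ) = -1
  · have htop := Matrix.GeneralLinearGroup.centralizer_eq_top_of_val_eq_one_or_neg_one hscal
    refine Or.inl ⟨⟨hscal, htop⟩, fun ⟨hcomm, _⟩ => ?_⟩
    obtain ⟨g, h, hgh⟩ := Matrix.GeneralLinearGroup.exists_mul_ne_mul
    exact hgh (hcomm g (htop ▸ Subgroup.mem_top g) h (htop ▸ Subgroup.mem_top h))
  · have hM' := mt Matrix.GeneralLinearGroup.val_eq_one_or_neg_one_of_mem_range_scalar hscal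
    have := Matrix.GeneralLinearGroup.finite_centralizer hM hM'
    exact Or.inr ⟨⟨fun A hA B hB =>
      Matrix.GeneralLinearGroup.commute_of_mem_centralizer hM' hA hB, ⊥, inferInstance,
      inferInstance⟩, fun h => hscal h.1⟩
end

section
/- Let G be a group with a finite-index characteristic subgroup A isomorphic to ℤ^m (so φ(A) = A for every automorphism φ of G). Suppose there is a group homomorphism sgn : G → {1,−1} (the units of ℤ) such that g⁻¹ x g = x^{sgn g} for all g ∈ G and x ∈ A. Then the set P = {φ ∈ Aut(A) : there exists ψ ∈ Aut(G) with ψ(a) = φ(a) for all a ∈ A} of automorphisms of A that extend to automorphisms of G is a subgroup of Aut(A) of finite index. -/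
/-!
Let `n = [G : A]`. The automorphisms `φ` of `A ≅ ℤ^m` acting trivially on `A / A^n` form a
subgroup of finite index, since `A / A^n` is finite, and each of them has the form
`φ x = x * r x ^ n` for an endomorphism `r` of `A` because `n`-th roots in `A` are unique.
Every such `φ` extends to `G`: as conjugation acts on `A` by `±1`, which commutes with `r`, the
corestriction `δ : G → A` of `r` is a crossed homomorphism with `δ x = r x ^ n` on `A`, so
`g ↦ g * δ g` is an automorphism of `G` restricting to `φ`.
-/

namespace Subgroup

instance characteristic_range_powMonoidHom {A : Type*} [CommGroup A] (n : ℕ) :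
    (powMonoidHom (α := A) n).range.Characteristic :=
  characteristic_iff_map_le.mpr fun φ ↦ by
    rintro _ ⟨_, ⟨y, rfl⟩, rfl⟩
    exact ⟨φ y, (map_pow φ y n).symm⟩

end Subgroup

def MulAut.quotient {A : Type*} [Group A] (N : Subgroup A) [N.Characteristic] :
    MulAut A →* MulAut (A ⧸ N) where
  toFun φ := QuotientGroup.congr N N φ (Subgroup.characteristic_iff_map_eq.mp ‹_› φ)
  map_one' := by ext ⟨x⟩; rfl
  map_mul' _ _ := by ext ⟨x⟩; rfl

theorem MulAut.mem_ker_quotient_iff {A : Type*} [Group A] {N : Subgroup A} [N.Characteristic]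
    {φ : MulAut A} : φ ∈ (MulAut.quotient N).ker ↔ ∀ x, x⁻¹ * φ x ∈ N := by
  simp only [MonoidHom.mem_ker, MulEquiv.ext_iff, QuotientGroup.forall_mk]
  exact forall_congr' fun x ↦ eq_comm.trans QuotientGroup.eq

theorem exists_eq_mul_pow {A : Type*} [CommGroup A] [IsMulTorsionFree A] {n : ℕ} (hn : n ≠ 0)
    (f : A →* A) (hf : ∀ x, x⁻¹ * f x ∈ (powMonoidHom (α := A) n).range) :
    ∃ r : A →* A, ∀ x, f x = x * r x ^ n := by
  let root := MonoidHom.ofInjective (f := powMonoidHom (α := A) n) (pow_left_injective hn)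
  refine ⟨root.symm.toMonoidHom.comp (((MonoidHom.id A)⁻¹ * f).codRestrict _ hf), fun x ↦ ?_⟩
  rw [show (_ : A) ^ n = x⁻¹ * f x from congrArg Subtype.val (root.apply_symm_apply _),
    mul_inv_cancel_left]

section Transfer

variable {G : Type*} [Group G] (A : Subgroup G) [A.Normal]

theorem QuotientGroup.out_mul_mul_out_inv_mem (q : G ⧸ A) (g : G) :
    q.out * g * (q * g).out⁻¹ ∈ A := by
  rw [← QuotientGroup.eq_one_iff]
  simp

noncomputable def cosetCocycle (q : G ⧸ A) (g : G) : A :=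
  ⟨q.out * g * (q * g).out⁻¹, QuotientGroup.out_mul_mul_out_inv_mem A q g⟩

variable {A}

theorem cosetCocycle_mul (q : G ⧸ A) (g h : G) :
    cosetCocycle A q (g * h) = cosetCocycle A q g * cosetCocycle A (q * g) h := by
  ext
  simp only [cosetCocycle, Subgroup.coe_mul, QuotientGroup.mk_mul, mul_assoc]
  group

theorem cosetCocycle_of_mem (q : G ⧸ A) {x : G} (hx : x ∈ A) :
    (cosetCocycle A q x : G) = q.out * x * q.out⁻¹ := by
  simp [cosetCocycle, (QuotientGroup.eq_one_iff x).mpr hx]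

theorem QuotientGroup.map_out_mul_of_le_ker {M : Type*} [Monoid M] (χ : G →* M)
    (hA : A ≤ χ.ker) (q : G ⧸ A) (g : G) : χ (q.out * g) = χ (q * g).out := by
  have hq : q.out * g = cosetCocycle A q g * (q * g).out := by simp [cosetCocycle]
  rw [hq, map_mul, hA (cosetCocycle A q g).2, one_mul]

variable (sgn : G →* ℤˣ)

variable {B : Type*} [CommGroup B] [Fintype (G ⧸ A)]

/-- The corestriction of `f`, a 1-cocycle of `A` acting trivially on `B`, to a 1-cocycle of `G`
acting on `B` through `sgn`. -/
noncomputable def twistedTransfer (f : A →* B) (g : G) : B :=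
  ∏ q : G ⧸ A, f (cosetCocycle A q g) ^ (sgn (q.out * g) : ℤ)

theorem twistedTransfer_mul (hA : A ≤ sgn.ker) (f : A →* B) (g h : G) :
    twistedTransfer sgn f (g * h) =
      twistedTransfer sgn f g ^ (sgn h : ℤ) * twistedTransfer sgn f h := by
  have hterm : ∀ q : G ⧸ A, f (cosetCocycle A q (g * h)) ^ (sgn (q.out * (g * h)) : ℤ) =
      (f (cosetCocycle A q g) ^ (sgn (q.out * g) : ℤ)) ^ (sgn h : ℤ) *
        f (cosetCocycle A (q * g) h) ^ (sgn ((q * g).out * h) : ℤ) := by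
    intro q
    have hsgn_mul : sgn ((q * g).out * h) = sgn (q.out * g) * sgn h := by
      rw [map_mul, QuotientGroup.map_out_mul_of_le_ker sgn hA]
    rw [cosetCocycle_mul, map_mul, ← mul_assoc, map_mul sgn _ h, hsgn_mul, Units.val_mul, mul_zpow,
      zpow_mul]
  simp only [twistedTransfer, hterm, Finset.prod_mul_distrib, Finset.prod_zpow]
  congr 1
  exact Fintype.prod_equiv (Equiv.mulRight (g : G ⧸ A)) _ _ fun _ ↦ rfl

theorem twistedTransfer_of_mem (hA : A ≤ sgn.ker)
    (hsgn : ∀ g x : G, x ∈ A → g⁻¹ * x * g = x ^ (sgn g : ℤ)) (f : A →* B) (x : A) :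
    twistedTransfer sgn f x = f x ^ Fintype.card (G ⧸ A) := by
  have hterm : ∀ q : G ⧸ A, f (cosetCocycle A q x) ^ (sgn (q.out * x) : ℤ) = f x := by
    intro q
    have hconj : cosetCocycle A q x = x ^ (sgn q.out : ℤ) := by
      ext
      have := hsgn q.out⁻¹ x x.2
      rw [inv_inv, map_inv, Int.units_inv_eq_self] at this
      rw [cosetCocycle_of_mem q x.2, SubgroupClass.coe_zpow, this]
    rw [hconj, map_mul, hA x.2, mul_one, map_zpow, ← zpow_mul, ← Units.val_mul,
      Int.units_mul_self, Units.val_one, zpow_one]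
  simp only [twistedTransfer, hterm, Finset.prod_const, Finset.card_univ]

end Transfer

open scoped IsMulCommutative

section Extension

variable {G : Type*} [Group G]

def MonoidHom.ofCrossedHom (δ : G → G) (hδ : ∀ g h, δ (g * h) = h⁻¹ * δ g * h * δ h) : G →* G :=
  MonoidHom.mk' (fun g ↦ g * δ g) fun g h ↦ by rw [hδ]; group

theorem MonoidHom.bijective_of_inv_mul_mem {A : Subgroup G} (ψ : G →* G)
    (hψ : ∀ g, g⁻¹ * ψ g ∈ A) (φ : MulAut A) (hφ : ∀ a : A, ψ a = φ a) :
    Function.Bijective ψ := by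
  refine ⟨(injective_iff_map_eq_one ψ).mpr fun g hg ↦ ?_, fun g ↦ ?_⟩
  · have hgA : g ∈ A := by simpa [hg] using hψ g
    have : φ ⟨g, hgA⟩ = 1 := Subtype.ext ((hφ ⟨g, hgA⟩).symm.trans hg)
    simpa using congrArg Subtype.val (φ.map_eq_one_iff.mp this)
  · obtain ⟨a, ha⟩ := φ.surjective ⟨_, hψ g⟩
    refine ⟨g * a⁻¹, ?_⟩
    rw [map_mul, hφ a⁻¹, map_inv, ha]
    simp

theorem Subgroup.le_ker_of_conj_eq_zpow {A : Subgroup G} [IsMulTorsionFree A] (sgn : G →* ℤˣ)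
    (hsgn : ∀ g x : G, x ∈ A → g⁻¹ * x * g = x ^ (sgn g : ℤ)) : A ≤ sgn.ker := by
  intro a ha
  rcases Int.units_eq_one_or (sgn a) with h | h
  · exact h
  · have hsq : (⟨a, ha⟩ : A) ^ 2 = 1 := by
      have := hsgn a a ha
      rw [h, inv_mul_cancel, one_mul, Units.val_neg, Units.val_one, zpow_neg_one] at this
      ext
      exact (sq a).trans (mul_eq_one_iff_eq_inv.mpr this)
    have : a = 1 := congrArg Subtype.val (sq_eq_one.mp hsq)
    simp [this] at h

theorem exists_mulAut_extension {A : Subgroup G} [A.Normal] [A.FiniteIndex] [IsMulCommutative A]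
    (sgn : G →* ℤˣ) (hA : A ≤ sgn.ker)
    (hsgn : ∀ g x : G, x ∈ A → g⁻¹ * x * g = x ^ (sgn g : ℤ))
    (φ : MulAut A) (r : A →* A) (hr : ∀ x, φ x = x * r x ^ A.index) :
    ∃ ψ : MulAut G, ∀ a : A, ψ a = φ a := by
  have := A.finite_quotient_of_finiteIndex
  let := Fintype.ofFinite (G ⧸ A)
  let δ : G → G := fun g ↦ (twistedTransfer sgn r g : A)
  have hδ : ∀ g h, δ (g * h) = h⁻¹ * δ g * h * δ h := by
    intro g h
    simp only [δ, twistedTransfer_mul sgn hA, Subgroup.coe_mul, SubgroupClass.coe_zpow,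
      hsgn h _ (SetLike.coe_mem _)]
  let ψ := MonoidHom.ofCrossedHom δ hδ
  have hψ : ∀ g, g⁻¹ * ψ g ∈ A := fun g ↦ by simp [ψ, MonoidHom.ofCrossedHom, δ]
  have hψA : ∀ a : A, ψ a = φ a := by
    intro a
    simp [ψ, MonoidHom.ofCrossedHom, δ, twistedTransfer_of_mem sgn hA hsgn, hr,
      A.index_eq_card, Nat.card_eq_fintype_card]
  exact ⟨MulEquiv.ofBijective ψ (ψ.bijective_of_inv_mul_mem hψ φ hψA), hψA⟩

end Extension

/-- let `A ≅ ℤ^m` be a finite-index characteristic subgroup of `G` on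
which conjugation acts via a sign homomorphism. Then the automorphisms of `A` that
extend to automorphisms of `G` form a finite-index subgroup of `Aut A`. -/
theorem extendable_automorphisms_finite_index {G : Type*} [Group G]
    (m : ℕ) (A : Subgroup G) [A.FiniteIndex]
    (hchar : ∀ φ : MulAut G, Subgroup.map φ.toMonoidHom A = A)
    (e : A ≃* Multiplicative (Fin m → ℤ))
    (sgn : G →* ℤˣ) (hsgn : ∀ g x : G, x ∈ A → g⁻¹ * x * g = x ^ ((sgn g : ℤ))) :
    ∃ P : Subgroup (MulAut A),
      (∀ φ : MulAut A, φ ∈ P ↔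
        ∃ ψ : MulAut G, ∀ a : A, ψ (a : G) = ((φ a : A) : G)) ∧
      P.FiniteIndex := by
  have : A.Characteristic := Subgroup.characteristic_iff_map_eq.mpr hchar
  have : IsMulCommutative A := ⟨⟨fun a b ↦ e.injective (by simp [mul_comm])⟩⟩
  have : IsMulTorsionFree A := e.injective.isMulTorsionFree e.toMonoidHom
  have : Group.FG A := Group.fg_of_surjective (f := e.symm.toMonoidHom) e.symm.surjective
  have hn : A.index ≠ 0 := Subgroup.FiniteIndex.index_ne_zero
  have := Subgroup.finiteIndex_range_powMonoidHom_of_fg A hn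
  have hK : (MulAut.quotient (powMonoidHom (α := A) A.index).range).ker ≤
      (MulAut.characteristic A).range := by
    intro φ hφ
    obtain ⟨r, hr⟩ := exists_eq_mul_pow hn φ.toMonoidHom (MulAut.mem_ker_quotient_iff.mp hφ)
    obtain ⟨ψ, hψ⟩ :=
      exists_mulAut_extension sgn (A.le_ker_of_conj_eq_zpow sgn hsgn) hsgn φ r hr
    exact ⟨ψ, MulEquiv.ext fun a ↦ Subtype.ext (hψ a)⟩
  refine ⟨(MulAut.characteristic A).range, fun φ ↦ ?_, Subgroup.finiteIndex_of_le hK⟩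
  simp [MulEquiv.ext_iff, Subtype.ext_iff]
end

section
/- Let G be a group with a finite-index characteristic subgroup A isomorphic to ℤ^r, and suppose there is a group homomorphism sgn : G → {1,−1} (the units of ℤ) such that g⁻¹ x g = x^{sgn g} for all g ∈ G and x ∈ A. Let ℤ^r ⋊ {1,−1} denote the semidirect product in which −1 acts on ℤ^r by inversion (negation). Then there exists a group homomorphism σ : G → ℤ^r ⋊ {1,−1} such that the restriction of σ to A is injective and, for every g ∈ G, the {1,−1}-coordinate of σ(g) equals sgn(g). -/
/-!
An element `x ∈ A` with `sgn x = -1` would satisfy `x = x⁻¹`, impossible in the torsion-free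
group `A ≅ ℤ^r` unless `x = 1`; so `sgn` is trivial on `A`. Fix coset representatives
`q.out` of `G ⧸ A` and let `c(g, q) = (g • q).out⁻¹ * g * q.out ∈ A`. The sign-twisted transfer
`D g = ∏_q c(g, q) ^ sgn (g • q).out` is a crossed homomorphism for the action of `ℤˣ` on `ℤ^r`
through `sgn`, so `g ↦ (D g, sgn g)` is a homomorphism into `ℤ^r ⋊ ℤˣ`. Since conjugation
acts on `A` through `sgn`, the signs cancel on `A` and `D x = x ^ [G : A]` there, which is
injective on the torsion-free group `ℤ^r`.
-/

/-- The action of `{1, -1} = ℤˣ` on `ℤ^r` (written multiplicatively) in which `-1`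
acts by inversion. -/
def signAut (r : ℕ) : ℤˣ →* MulAut (Multiplicative (Fin r → ℤ)) where
  toFun u :=
    { toFun := fun x => x ^ ((u : ℤ))
      invFun := fun x => x ^ ((u : ℤ))
      left_inv := fun x => by
        have h : ((u : ℤ)) * ((u : ℤ)) = 1 := by
          rw [← Units.val_mul, Int.units_mul_self, Units.val_one]
        show (x ^ ((u : ℤ))) ^ ((u : ℤ)) = x
        rw [← zpow_mul, h, zpow_one]
      right_inv := fun x => by
        have h : ((u : ℤ)) * ((u : ℤ)) = 1 := by
          rw [← Units.val_mul, Int.units_mul_self, Units.val_one]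
        show (x ^ ((u : ℤ))) ^ ((u : ℤ)) = x
        rw [← zpow_mul, h, zpow_one]
      map_mul' := fun x y => mul_zpow x y ((u : ℤ)) }
  map_one' := by
    ext1 x
    show x ^ (((1 : ℤˣ) : ℤ)) = x
    simp
  map_mul' u v := by
    ext1 x
    simp only [MulAut.mul_apply]
    show x ^ (((u * v : ℤˣ) : ℤ)) = (x ^ ((v : ℤ))) ^ ((u : ℤ))
    rw [← zpow_mul, mul_comm ((v : ℤ)) ((u : ℤ)), ← Units.val_mul]

namespace SemidirectProduct

variable {N G H : Type*} [Group N] [Group G] [Group H] {φ : G →* MulAut N}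

def homOfCrossedHom (χ : H →* G) (D : H → N) (hD : ∀ a b, D (a * b) = D a * φ (χ a) (D b)) :
    H →* N ⋊[φ] G :=
  MonoidHom.mk' (fun h => ⟨D h, χ h⟩) fun a b => by ext <;> simp [hD]

end SemidirectProduct

namespace Subgroup

variable {G : Type*} [Group G] (A : Subgroup G)

noncomputable def outCocycle (g : G) (q : G ⧸ A) : A :=
  ⟨(g • q).out⁻¹ * (g * q.out), by
    rw [← QuotientGroup.eq, QuotientGroup.out_eq', ← smul_eq_mul,
      ← MulAction.Quotient.smul_mk, QuotientGroup.out_eq']⟩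

theorem out_smul_mul_outCocycle (g : G) (q : G ⧸ A) :
    (g • q).out * (A.outCocycle g q : G) = g * q.out :=
  mul_inv_cancel_left _ _

theorem outCocycle_mul (g h : G) (q : G ⧸ A) :
    A.outCocycle (g * h) q = A.outCocycle g (h • q) * A.outCocycle h q := by
  ext
  simp only [outCocycle, mul_smul, Subgroup.coe_mul]
  group

variable {A} (sgn : G →* ℤˣ)

theorem sgn_out_smul (hA : A ≤ sgn.ker) (g : G) (q : G ⧸ A) :
    sgn (g • q).out = sgn g * sgn q.out := by
  have h := congrArg sgn (A.out_smul_mul_outCocycle g q)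
  rwa [map_mul, map_mul, hA (A.outCocycle g q).2, mul_one] at h

theorem le_ker_of_conj_eq_zpow_s19 [IsMulTorsionFree A]
    (hsgn : ∀ g x : G, x ∈ A → g⁻¹ * x * g = x ^ (sgn g : ℤ)) : A ≤ sgn.ker := by
  intro x hx
  rcases Int.units_eq_one_or (sgn x) with h | h
  · exact h
  have hinv : x = x⁻¹ := by simpa [h] using hsgn x x hx
  have hsq : (⟨x, hx⟩ : A) ^ 2 = 1 ^ 2 := by
    ext
    simp [sq, mul_eq_one_iff_eq_inv, ← hinv]
  have hx1 : x = 1 := congrArg Subtype.val (pow_left_injective two_ne_zero hsq)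
  simp [hx1] at h

variable {N : Type*} [CommGroup N] (f : A →* N) [Fintype (G ⧸ A)]

noncomputable def twistedTransfer (g : G) : N :=
  ∏ q : G ⧸ A, f (A.outCocycle g q) ^ (sgn (g • q).out : ℤ)

theorem twistedTransfer_mul (hA : A ≤ sgn.ker) (g h : G) :
    A.twistedTransfer sgn f (g * h) =
      A.twistedTransfer sgn f g * A.twistedTransfer sgn f h ^ (sgn g : ℤ) := by
  simp only [twistedTransfer, outCocycle_mul, map_mul, mul_zpow, Finset.prod_mul_distrib,
    mul_smul]
  congr 1
  · exact Fintype.prod_bijective (h • ·) (MulAction.bijective h) _ _ fun q => rfl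
  · rw [← Finset.prod_zpow]
    refine Finset.prod_congr rfl fun q _ => ?_
    rw [sgn_out_smul sgn hA, Units.val_mul, mul_comm, zpow_mul]

theorem twistedTransfer_of_mem (hsgn : ∀ g x : G, x ∈ A → g⁻¹ * x * g = x ^ (sgn g : ℤ))
    (x : A) : A.twistedTransfer sgn f x = f x ^ A.index := by
  have hfix (q : G ⧸ A) : (x : G) • q = q := QuotientGroup.induction_on q fun y => by
    rw [MulAction.Quotient.smul_mk, smul_eq_mul, QuotientGroup.eq, mul_inv_rev,
      hsgn y _ (A.inv_mem x.2)]
    exact A.zpow_mem (A.inv_mem x.2) _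
  have hcoc (q : G ⧸ A) : A.outCocycle x q = x ^ (sgn q.out : ℤ) := by
    ext
    simp only [outCocycle, hfix q, ← mul_assoc, hsgn q.out x x.2, SubgroupClass.coe_zpow]
  simp only [twistedTransfer, hfix, hcoc, map_zpow, ← zpow_mul, Int.units_coe_mul_self,
    zpow_one, Finset.prod_const, Finset.card_univ, index_eq_card, Nat.card_eq_fintype_card]

end Subgroup

theorem exists_hom_to_semidirect_of_sgn_general {G : Type*} [Group G]
    (r : ℕ) (A : Subgroup G) [A.FiniteIndex]
    (e : A ≃* Multiplicative (Fin r → ℤ))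
    (sgn : G →* ℤˣ) (hsgn : ∀ g x : G, x ∈ A → g⁻¹ * x * g = x ^ ((sgn g : ℤ))) :
    ∃ σ : G →* SemidirectProduct (Multiplicative (Fin r → ℤ)) ℤˣ (signAut r),
      Function.Injective (σ.comp A.subtype) ∧
      ∀ g : G, (σ g).right = sgn g := by
  have := Fintype.ofFinite (G ⧸ A)
  have : IsMulTorsionFree A := e.injective.isMulTorsionFree e.toMonoidHom
  have hA : A ≤ sgn.ker := A.le_ker_of_conj_eq_zpow_s19 sgn hsgn
  refine ⟨SemidirectProduct.homOfCrossedHom sgn (A.twistedTransfer sgn e.toMonoidHom)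
    (A.twistedTransfer_mul sgn _ hA), fun x y hxy => ?_, fun _ => rfl⟩
  have hD := congrArg SemidirectProduct.left hxy
  simp only [MonoidHom.comp_apply, Subgroup.coe_subtype, SemidirectProduct.homOfCrossedHom,
    MonoidHom.mk'_apply, A.twistedTransfer_of_mem sgn _ hsgn] at hD
  exact e.injective (pow_left_injective A.index_ne_zero_of_finite hD)

/-- if `A ≅ ℤ^r` is a finite-index characteristic subgroup of `G` on
which conjugation acts via a sign homomorphism `sgn`, then there is a homomorphism
`σ : G → ℤ^r ⋊ {1,-1}` (with `-1` acting by inversion) that is injective on `A` and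
whose `{1,-1}`-coordinate is `sgn`. -/
theorem exists_hom_to_semidirect_of_sgn {G : Type*} [Group G]
    (r : ℕ) (A : Subgroup G) [A.FiniteIndex]
    (hchar : ∀ φ : MulAut G, Subgroup.map φ.toMonoidHom A = A)
    (e : A ≃* Multiplicative (Fin r → ℤ))
    (sgn : G →* ℤˣ) (hsgn : ∀ g x : G, x ∈ A → g⁻¹ * x * g = x ^ ((sgn g : ℤ))) :
    ∃ σ : G →* SemidirectProduct (Multiplicative (Fin r → ℤ)) ℤˣ (signAut r),
      Function.Injective (σ.comp A.subtype) ∧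
      ∀ g : G, (σ g).right = sgn g :=
  exists_hom_to_semidirect_of_sgn_general r A e sgn hsgn
end
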